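/- Let P, Q be probability measures on ℝ^d, and for a probability measure R on ℝ^d define Λ_R(v) := log ∫ e^{v·y} R(dy) and the Cramér rate function I_R(x) := sup_{v ∈ ℝ^d} { v·x − Λ_R(v) }. Then for every x ∈ ℝ^d, sup_{c>1} { c⁻¹ I_P(x) − (c−1)⁻¹ R_{c/(c−1)}(Q‖P) } ≤ I_Q(x) ≤ inf_{0<c<1} { c⁻¹ I_P(x) + (1−c)⁻¹ R_{1/(1−c)}(P‖Q) }, where in the lower bound the convention ∞ − ∞ ≡ −∞ is used. -/

import Mathlib

open MeasureTheory Real Set Filter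
open scoped ENNReal Classical

variable {Ω : Type*} [MeasurableSpace Ω]

/-- Auxiliary Rényi divergence for `α ∈ (0,1) ∪ (1,∞)`:
`R_α(Q‖P) = (α(α-1))⁻¹ log ∫_{p>0} q^α p^{1-α} dν` with `ν = P + Q`,
and `+∞` if `α > 1` and `Q` is not absolutely continuous w.r.t. `P`. -/
noncomputable def renyiDivAux (α : ℝ) (Q P : Measure Ω) : EReal :=
  if 1 < α ∧ ¬ Q ≪ P then (⊤ : EReal)
  else ((α * (α - 1))⁻¹ : ℝ) *
    ENNReal.log (∫⁻ x in {x | 0 < P.rnDeriv (P + Q) x},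
      (Q.rnDeriv (P + Q) x) ^ α * (P.rnDeriv (P + Q) x) ^ (1 - α) ∂(P + Q))

/-- Rényi divergence of order `α ∈ ℝ \ {0,1}`, extended to negative orders by
`R_α(Q‖P) = R_{1-α}(P‖Q)`. -/
noncomputable def renyiDiv (α : ℝ) (Q P : Measure Ω) : EReal :=
  if α < 0 then renyiDivAux (1 - α) P Q else renyiDivAux α Q P

/-- Relative entropy (KL divergence): `R(Q‖P) = ∫ log(dQ/dP) dQ` if `Q ≪ P`, else `+∞`. -/
noncomputable def relEnt (Q P : Measure Ω) : EReal :=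
  if Q ≪ P then ((∫ x, Real.log (Q.rnDeriv P x).toReal ∂Q : ℝ) : EReal) else ⊤

/-- Cumulant generating function of `log (dQ/dP)` under `Q`:
`Λ_Q^{log dQ/dP}(λ) = log E_Q[(dQ/dP)^λ]`. -/
noncomputable def cgfLLR (Q P : Measure Ω) (l : ℝ) : EReal :=
  ENNReal.log (∫⁻ x, (Q.rnDeriv P x) ^ l ∂Q)

/-- Rényi-divergence ambiguity set `U^Λ(P)`. -/
def ambiguitySet (L : ℝ → EReal) (P : Measure Ω) : Set (Measure Ω) :=
  {Q | IsProbabilityMeasure Q ∧ Q ≪ P ∧ ∀ l > 0, cgfLLR Q P l ≤ L l}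

/-- Addition on `EReal` with the convention `-∞ + ∞ = ∞`. -/
noncomputable def EReal.addTop (x y : EReal) : EReal := if x = ⊤ ∨ y = ⊤ then ⊤ else x + y

/-- `G(r) = P(dQ/dP ≥ r)`. -/
noncomputable def tailG (Q P : Measure Ω) (r : ℝ) : ℝ≥0∞ :=
  P {x | ENNReal.ofReal r ≤ Q.rnDeriv P x}

/-- The distribution of `dQ/dP` under `P` (as a measure on `ℝ`). -/
noncomputable def likDist (Q P : Measure Ω) : Measure ℝ :=
  P.map (fun x => (Q.rnDeriv P x).toReal)

/-- `G_μ(r) = μ([r,∞))`. -/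
noncomputable def Gmu (μ : Measure ℝ) (r : ℝ) : ℝ≥0∞ := μ (Set.Ici r)

/-- `Λ_μ(λ) = log((λ+1) ∫₀^∞ G_μ(z) z^λ dz)`. -/
noncomputable def Lmu (μ : Measure ℝ) (l : ℝ) : EReal :=
  ENNReal.log (ENNReal.ofReal (l + 1) *
    ∫⁻ z in Set.Ioi (0 : ℝ), Gmu μ z * ENNReal.ofReal (z ^ l))

/-- The ambiguity set `U^μ(P) = U^{Λ_μ}(P)`. -/
def Umu (μ : Measure ℝ) (P : Measure Ω) : Set (Measure Ω) := ambiguitySet (Lmu μ) P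


/-- The cumulant generating function `Λ_R(v) = log ∫ e^{v·y} dR(y)`. -/
noncomputable def cramerCGF {d : ℕ} (R : Measure (Fin d → ℝ)) (v : Fin d → ℝ) : EReal :=
  ENNReal.log (∫⁻ y, ENNReal.ofReal (Real.exp (∑ i, v i * y i)) ∂ R)

/-- The Cramér rate function `I_R(x) = sup_v { v·x - Λ_R(v) }`. -/
noncomputable def cramerRate {d : ℕ} (R : Measure (Fin d → ℝ)) (x : Fin d → ℝ) : EReal :=
  ⨆ v : Fin d → ℝ, (((∑ i, v i * x i : ℝ) : EReal) - cramerCGF R v)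

section Aux

variable {d : ℕ}

private lemma meas_exp (v : Fin d → ℝ) :
    Measurable (fun y : Fin d → ℝ => ENNReal.ofReal (Real.exp (∑ i, v i * y i))) := by
  apply Measurable.ennreal_ofReal
  exact Real.measurable_exp.comp
    (Finset.measurable_sum _ fun i _ => by fun_prop)

private lemma lint_exp_pos (R : Measure (Fin d → ℝ)) [IsProbabilityMeasure R] (v : Fin d → ℝ) :
    0 < ∫⁻ y, ENNReal.ofReal (Real.exp (∑ i, v i * y i)) ∂ R := by
  rw [lintegral_pos_iff_support (meas_exp v)]
  have hsupp : Function.support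
      (fun y : Fin d → ℝ => ENNReal.ofReal (Real.exp (∑ i, v i * y i))) = Set.univ := by
    ext y
    simp [Function.mem_support, ENNReal.ofReal_eq_zero, not_le, Real.exp_pos]
  rw [hsupp]
  simp

private lemma cgf_ne_bot (R : Measure (Fin d → ℝ)) [IsProbabilityMeasure R] (v : Fin d → ℝ) :
    cramerCGF R v ≠ ⊥ := by
  simp only [cramerCGF, ne_eq, ENNReal.log_eq_bot_iff]
  exact (lint_exp_pos R v).ne'

private lemma cgf_zero (R : Measure (Fin d → ℝ)) [IsProbabilityMeasure R] :
    cramerCGF R (0 : Fin d → ℝ) = 0 := by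
  simp [cramerCGF]

private lemma rate_nonneg (R : Measure (Fin d → ℝ)) [IsProbabilityMeasure R] (x : Fin d → ℝ) :
    0 ≤ cramerRate R x := by
  have h := le_iSup (fun v : Fin d → ℝ => (((∑ i, v i * x i : ℝ) : EReal) - cramerCGF R v)) 0
  simpa [cgf_zero, cramerRate] using h

private lemma renyi_int_eq (P Q : Measure Ω) [IsFiniteMeasure P] [IsFiniteMeasure Q]
    (h : Q ≪ P) {α : ℝ} (hα : 0 < α) :
    ∫⁻ x in {x | 0 < P.rnDeriv (P + Q) x},
        (Q.rnDeriv (P + Q) x) ^ α * (P.rnDeriv (P + Q) x) ^ (1 - α) ∂(P + Q)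
      = ∫⁻ x, (Q.rnDeriv P x) ^ α ∂P := by
  set ν := P + Q with hν
  have hPν : P ≪ ν := Measure.absolutelyContinuous_of_le (Measure.le_add_right le_rfl)
  have hmeas_f : Measurable fun x => (Q.rnDeriv P x) ^ α :=
    ENNReal.continuous_rpow_const.measurable.comp (Measure.measurable_rnDeriv Q P)
  rw [← lintegral_rnDeriv_mul hPν hmeas_f.aemeasurable]
  have hs : MeasurableSet {x | 0 < P.rnDeriv ν x} :=
    measurableSet_lt measurable_const (Measure.measurable_rnDeriv _ _)
  rw [← lintegral_indicator hs]
  refine lintegral_congr_ae ?_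
  filter_upwards [Measure.rnDeriv_mul_rnDeriv (μ := Q) (ν := P) (κ := ν) h,
    Measure.rnDeriv_lt_top P ν] with y hy hp
  rcases eq_or_lt_of_le (zero_le : 0 ≤ P.rnDeriv ν y) with hp0 | hp0
  · have hy_notmem : y ∉ {x | 0 < P.rnDeriv ν x} := by simp [← hp0]
    rw [Set.indicator_of_notMem hy_notmem, ← hp0, zero_mul]
  · have hy_mem : y ∈ {x | 0 < P.rnDeriv ν x} := hp0
    rw [Set.indicator_of_mem hy_mem]
    have hyq : Q.rnDeriv ν y = Q.rnDeriv P y * P.rnDeriv ν y := by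
      rw [← hy]; rfl
    rw [hyq, ENNReal.mul_rpow_of_nonneg _ _ hα.le, mul_assoc,
      ← ENNReal.rpow_add α (1 - α) hp0.ne' hp.ne]
    norm_num
    rw [mul_comm]

private lemma renyiDiv_eq' (P Q : Measure Ω) [IsFiniteMeasure P] [IsFiniteMeasure Q]
    (h : Q ≪ P) {α : ℝ} (hα : 1 < α) :
    renyiDiv α Q P
      = (((α * (α - 1))⁻¹ : ℝ) : EReal) * ENNReal.log (∫⁻ x, (Q.rnDeriv P x) ^ α ∂P) := by
  rw [renyiDiv, if_neg (by push_neg; linarith), renyiDivAux, if_neg (by tauto),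
    renyi_int_eq P Q h (by linarith)]

private lemma cgf_holder (P Q : Measure (Fin d → ℝ)) [IsProbabilityMeasure P]
    [IsProbabilityMeasure Q] (h : Q ≪ P) {c : ℝ} (hc : 1 < c) (v : Fin d → ℝ) :
    cramerCGF Q v ≤ ((c⁻¹ : ℝ) : EReal) * cramerCGF P (c • v)
      + (((c - 1)⁻¹ : ℝ) : EReal) * renyiDiv (c / (c - 1)) Q P := by
  have hc0 : (0:ℝ) < c := by linarith
  have hcm : (0:ℝ) < c - 1 := by linarith
  set α := c / (c - 1) with hαdef
  have hconj : c.HolderConjugate α := Real.HolderConjugate.conjExponent hc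
  have hα1 : 1 < α := hconj.symm.lt
  set g := fun y : Fin d → ℝ => ENNReal.ofReal (Real.exp (∑ i, v i * y i)) with hg
  set f := Q.rnDeriv P with hf
  have h1 : ∫⁻ y, g y ∂Q = ∫⁻ y, (g * f) y ∂P := by
    haveI := Measure.haveLebesgueDecomposition_of_sigmaFinite Q P
    rw [← lintegral_rnDeriv_mul (μ := Q) (ν := P) h (meas_exp v).aemeasurable]
    refine lintegral_congr fun y => ?_
    simp [mul_comm, hg, hf]
  have hB : ∫⁻ y, g y ^ c ∂P = ∫⁻ y, ENNReal.ofReal (Real.exp (∑ i, (c • v) i * y i)) ∂P := by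
    refine lintegral_congr fun y => ?_
    have hsum : (∑ i, (c • v) i * y i) = (∑ i, v i * y i) * c := by
      simp [Finset.sum_mul, Finset.mul_sum]; ring_nf
    rw [hg]
    simp only
    rw [ENNReal.ofReal_rpow_of_pos (Real.exp_pos _), hsum, Real.exp_mul]
  have hold := ENNReal.lintegral_mul_le_Lp_mul_Lq P hconj (meas_exp v).aemeasurable
    (Measure.measurable_rnDeriv Q P).aemeasurable
  have hlog : cramerCGF Q v
      ≤ ENNReal.log ((∫⁻ y, g y ^ c ∂P) ^ (1 / c) * (∫⁻ y, f y ^ α ∂P) ^ (1 / α)) := by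
    rw [cramerCGF]
    exact ENNReal.log_monotone (h1 ▸ hold)
  rw [ENNReal.log_mul_add, ENNReal.log_rpow, ENNReal.log_rpow] at hlog
  refine hlog.trans (le_of_eq ?_)
  congr 1
  · rw [one_div]
    congr 1
    rw [cramerCGF, hB]
  · rw [renyiDiv_eq' P Q h hα1, ← mul_assoc, ← EReal.coe_mul]
    congr 2
    rw [hαdef]
    field_simp
    try ring
  done

private lemma coe_mul_ne_bot {r : ℝ} (hr : 0 < r) {X : EReal} (hX : X ≠ ⊥) :
    (r : EReal) * X ≠ ⊥ := by
  by_cases hT : X = ⊤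
  · rw [hT, EReal.coe_mul_top_of_pos hr]
    simp
  · rw [← EReal.coe_toReal hT hX, ← EReal.coe_mul]
    exact EReal.coe_ne_bot _

end Aux

/-- **UQ bounds for large deviations rate functions (Theorem 8.1).** For probability
measures `P, Q` on `ℝ^d` and every `x`,
`sup_{c>1} { c⁻¹ I_P(x) - (c-1)⁻¹ R_{c/(c-1)}(Q‖P) } ≤ I_Q(x)
 ≤ inf_{0<c<1} { c⁻¹ I_P(x) + (1-c)⁻¹ R_{1/(1-c)}(P‖Q) }`,
with the convention `∞ - ∞ = -∞` (the default on `EReal`) in the lower bound. -/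
theorem rate_function_uq_bounds {d : ℕ} (P Q : Measure (Fin d → ℝ))
    [IsProbabilityMeasure P] [IsProbabilityMeasure Q] (x : Fin d → ℝ) :
    (⨆ c ∈ Set.Ioi (1 : ℝ),
        ((c⁻¹ : ℝ) : EReal) * cramerRate P x
          - (((c - 1)⁻¹ : ℝ) : EReal) * renyiDiv (c / (c - 1)) Q P) ≤
      cramerRate Q x ∧
    cramerRate Q x ≤
      ⨅ c ∈ Set.Ioo (0 : ℝ) 1,
        ((c⁻¹ : ℝ) : EReal) * cramerRate P x
          + (((1 - c)⁻¹ : ℝ) : EReal) * renyiDiv (1 / (1 - c)) P Q := by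
  constructor
  · -- lower bound
    refine iSup₂_le fun c hc => ?_
    have hc1 : 1 < c := hc
    have hc0 : (0:ℝ) < c := by linarith
    have hcm : (0:ℝ) < c - 1 := by linarith
    have hβ : (0:ℝ) < (c - 1)⁻¹ := by positivity
    have hα1 : 1 < c / (c - 1) := (Real.HolderConjugate.conjExponent hc1).symm.lt
    set R := renyiDiv (c / (c - 1)) Q P with hRdef
    by_cases hac : Q ≪ P
    swap
    · have hRtop : R = ⊤ := by
        rw [hRdef, renyiDiv, if_neg (by push_neg; linarith), renyiDivAux, if_pos ⟨hα1, hac⟩]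
      rw [hRtop, EReal.coe_mul_top_of_pos hβ, EReal.sub_top]
      exact bot_le
    by_cases hRtop : R = ⊤
    · rw [hRtop, EReal.coe_mul_top_of_pos hβ, EReal.sub_top]
      exact bot_le
    have hRnb : R ≠ ⊥ := by
      intro hb
      have h0 := cgf_holder P Q hac hc1 0
      rw [smul_zero, cgf_zero, cgf_zero, ← hRdef, hb, mul_zero, zero_add,
        EReal.coe_mul_bot_of_pos hβ] at h0
      exact absurd h0 (by simp)
    set r := R.toReal with hr
    have hRr : R = (r : EReal) := (EReal.coe_toReal hRtop hRnb).symm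
    by_cases hIQ : cramerRate Q x = ⊤
    · rw [hIQ]; exact le_top
    have hIQnb : cramerRate Q x ≠ ⊥ := by
      intro hb
      have := rate_nonneg Q x
      rw [hb] at this
      exact absurd this (by simp)
    set iq := (cramerRate Q x).toReal with hiq
    have hIQeq : cramerRate Q x = (iq : EReal) := (EReal.coe_toReal hIQ hIQnb).symm
    have key : ∀ u : Fin d → ℝ, ((∑ i, u i * x i : ℝ) : EReal) - cramerCGF P u
        ≤ ((c * iq + c * ((c - 1)⁻¹ * r) : ℝ) : EReal) := by
      intro u
      set w := c⁻¹ • u with hw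
      have hcw : c • w = u := by
        rw [hw, smul_smul, mul_inv_cancel₀ (ne_of_gt hc0), one_smul]
      have h1 := cgf_holder P Q hac hc1 w
      rw [hcw, ← hRdef, hRr] at h1
      by_cases hPu : cramerCGF P u = ⊤
      · rw [hPu, EReal.sub_top]; exact bot_le
      have hPnb : cramerCGF P u ≠ ⊥ := cgf_ne_bot P u
      set a := (cramerCGF P u).toReal with ha
      have hPeq : cramerCGF P u = (a : EReal) := (EReal.coe_toReal hPu hPnb).symm
      have hQw_top : cramerCGF Q w ≠ ⊤ := by
        intro htop
        rw [htop, hPeq, ← EReal.coe_mul, ← EReal.coe_mul, ← EReal.coe_add] at h1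
        exact absurd (top_le_iff.mp h1) (EReal.coe_ne_top _)
      set b := (cramerCGF Q w).toReal with hb
      have hQeq : cramerCGF Q w = (b : EReal) := (EReal.coe_toReal hQw_top (cgf_ne_bot Q w)).symm
      have hble : b ≤ c⁻¹ * a + (c - 1)⁻¹ * r := by
        rw [hQeq, hPeq, ← EReal.coe_mul, ← EReal.coe_mul, ← EReal.coe_add] at h1
        exact_mod_cast h1
      have hwle : (∑ i, w i * x i) - b ≤ iq := by
        have hle : ((∑ i, w i * x i : ℝ) : EReal) - cramerCGF Q w ≤ cramerRate Q x :=
          le_iSup (fun v : Fin d → ℝ => (((∑ i, v i * x i : ℝ) : EReal) - cramerCGF Q v)) w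
        rw [hQeq, hIQeq, ← EReal.coe_sub] at hle
        exact_mod_cast hle
      have hux : (∑ i, u i * x i) = c * ∑ i, w i * x i := by
        rw [← hcw, Finset.mul_sum]
        refine Finset.sum_congr rfl fun i _ => ?_
        simp [mul_assoc]
      rw [hPeq, ← EReal.coe_sub, EReal.coe_le_coe_iff, hux]
      have h2 : c * b ≤ a + c * ((c - 1)⁻¹ * r) := by
        have h3 := mul_le_mul_of_nonneg_left hble hc0.le
        calc c * b ≤ c * (c⁻¹ * a + (c - 1)⁻¹ * r) := h3
          _ = a + c * ((c - 1)⁻¹ * r) := by field_simp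
      have h4 := mul_le_mul_of_nonneg_left hwle hc0.le
      nlinarith [h2, h4]
    have hIPle : cramerRate P x ≤ ((c * iq + c * ((c - 1)⁻¹ * r) : ℝ) : EReal) := iSup_le key
    have hIPnt : cramerRate P x ≠ ⊤ := by
      intro ht
      rw [ht] at hIPle
      exact absurd (top_le_iff.mp hIPle) (EReal.coe_ne_top _)
    have hIPnb : cramerRate P x ≠ ⊥ := by
      intro hb
      have := rate_nonneg P x
      rw [hb] at this
      exact absurd this (by simp)
    set ip := (cramerRate P x).toReal with hip
    have hIPeq : cramerRate P x = (ip : EReal) := (EReal.coe_toReal hIPnt hIPnb).symm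
    have hiple : ip ≤ c * iq + c * ((c - 1)⁻¹ * r) := by
      rw [hIPeq] at hIPle
      exact_mod_cast hIPle
    rw [hIPeq, hRr, hIQeq, ← EReal.coe_mul, ← EReal.coe_mul, ← EReal.coe_sub,
      EReal.coe_le_coe_iff]
    have h5 : c⁻¹ * ip ≤ iq + (c - 1)⁻¹ * r := by
      have h6 := mul_le_mul_of_nonneg_left hiple (inv_nonneg.mpr hc0.le)
      calc c⁻¹ * ip ≤ c⁻¹ * (c * iq + c * ((c - 1)⁻¹ * r)) := h6
        _ = iq + (c - 1)⁻¹ * r := by field_simp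
    linarith
  · -- upper bound
    refine le_iInf₂ fun c hc => ?_
    obtain ⟨hc0, hc1⟩ := hc
    have h1c : (0:ℝ) < 1 - c := by linarith
    have hβ : (0:ℝ) < (1 - c)⁻¹ := by positivity
    have hα1 : 1 < 1 / (1 - c) := by
      rw [lt_div_iff₀ h1c]; linarith
    set R := renyiDiv (1 / (1 - c)) P Q with hRdef
    have hIPnb : cramerRate P x ≠ ⊥ := by
      intro hb
      have := rate_nonneg P x
      rw [hb] at this
      exact absurd this (by simp)
    have hcinv : (0:ℝ) < c⁻¹ := by positivity
    by_cases hac : P ≪ Q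
    swap
    · have hRtop : R = ⊤ := by
        rw [hRdef, renyiDiv, if_neg (by push_neg; linarith), renyiDivAux, if_pos ⟨hα1, hac⟩]
      rw [hRtop, EReal.coe_mul_top_of_pos hβ,
        EReal.add_top_of_ne_bot (coe_mul_ne_bot hcinv hIPnb)]
      exact le_top
    have hc' : 1 < c⁻¹ := (one_lt_inv₀ hc0).mpr hc1
    have e3 : c⁻¹ / (c⁻¹ - 1) = 1 / (1 - c) := by
      rw [div_eq_div_iff (by rw [sub_pos] at *; linarith) h1c.ne']
      field_simp
    have e2 : (c⁻¹ - 1)⁻¹ = c * (1 - c)⁻¹ := by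
      rw [show c⁻¹ - 1 = (1 - c) / c by field_simp]
      rw [inv_div]
      ring
    by_cases hRtop : R = ⊤
    · rw [hRtop, EReal.coe_mul_top_of_pos hβ,
        EReal.add_top_of_ne_bot (coe_mul_ne_bot hcinv hIPnb)]
      exact le_top
    have hRnb : R ≠ ⊥ := by
      intro hb
      have h0 := cgf_holder Q P hac hc' 0
      rw [smul_zero, cgf_zero, cgf_zero, e3, ← hRdef, hb, mul_zero, zero_add,
        EReal.coe_mul_bot_of_pos (by rw [e2]; positivity)] at h0
      exact absurd h0 (by simp)
    set r := R.toReal with hr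
    have hRr : R = (r : EReal) := (EReal.coe_toReal hRtop hRnb).symm
    refine iSup_le fun v => ?_
    by_cases hQv : cramerCGF Q v = ⊤
    · rw [hQv, EReal.sub_top]; exact bot_le
    set b := (cramerCGF Q v).toReal with hb
    have hQeq : cramerCGF Q v = (b : EReal) := (EReal.coe_toReal hQv (cgf_ne_bot Q v)).symm
    have h1 := cgf_holder Q P hac hc' (c • v)
    rw [smul_smul, inv_mul_cancel₀ (ne_of_gt hc0), one_smul, e3, ← hRdef, hRr, hQeq,
      inv_inv] at h1
    have hPtop : cramerCGF P (c • v) ≠ ⊤ := by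
      intro ht
      rw [ht, ← EReal.coe_mul, ← EReal.coe_mul, ← EReal.coe_add] at h1
      exact absurd (top_le_iff.mp h1) (EReal.coe_ne_top _)
    set a := (cramerCGF P (c • v)).toReal with ha
    have hPeq : cramerCGF P (c • v) = (a : EReal) := (EReal.coe_toReal hPtop (cgf_ne_bot P _)).symm
    have hab : a ≤ c * b + c * ((1 - c)⁻¹ * r) := by
      rw [hPeq, ← EReal.coe_mul, ← EReal.coe_mul, ← EReal.coe_add, EReal.coe_le_coe_iff] at h1
      rw [e2] at h1
      linarith [h1]
    have hPle : ((∑ i, (c • v) i * x i : ℝ) : EReal) - cramerCGF P (c • v) ≤ cramerRate P x :=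
      le_iSup (fun u : Fin d → ℝ => (((∑ i, u i * x i : ℝ) : EReal) - cramerCGF P u)) (c • v)
    by_cases hIPtop : cramerRate P x = ⊤
    · rw [hIPtop, EReal.coe_mul_top_of_pos hcinv, hRr, ← EReal.coe_mul, EReal.top_add_coe]
      exact le_top
    set ip := (cramerRate P x).toReal with hip
    have hIPeq : cramerRate P x = (ip : EReal) := (EReal.coe_toReal hIPtop hIPnb).symm
    have hsum : (∑ i, (c • v) i * x i) = c * ∑ i, v i * x i := by
      rw [Finset.mul_sum]
      refine Finset.sum_congr rfl fun i _ => ?_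
      simp [mul_assoc]
    have hax : c * (∑ i, v i * x i) - a ≤ ip := by
      rw [hPeq, hIPeq, ← EReal.coe_sub, EReal.coe_le_coe_iff, hsum] at hPle
      exact hPle
    rw [hQeq, hIPeq, hRr, ← EReal.coe_mul, ← EReal.coe_mul, ← EReal.coe_sub, ← EReal.coe_add,
      EReal.coe_le_coe_iff]
    have h9 : c * ((∑ i, v i * x i) - b - (1 - c)⁻¹ * r) ≤ ip := by nlinarith [hab, hax]
    have h10 := mul_le_mul_of_nonneg_left h9 (inv_nonneg.mpr hc0.le)
    rw [← mul_assoc, inv_mul_cancel₀ (ne_of_gt hc0), one_mul] at h10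
    linarith
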